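/- (Lemma 2.5, product law, Fourier-side form.) Let r ∈ [1,2], T ∈ (0,∞] and α ∈ (0,1). There exists a constant C > 0 such that for all measurable F, G : (0,T) × ℝ³ → ℂ (thought of as the Fourier transforms of two functions f, g, so that the Fourier transform of the product fg at time t is (2π)^{−3} F(t,·) ∗ G(t,·), where ∗ is convolution on ℝ³), one has N^{0}_{r,1,T}((t,ξ) ↦ (2π)^{−3} (F(t,·) ∗ G(t,·))(ξ)) ≤ C ( N^{α}_{r,2/(1+α),T}(F) · N^{−α}_{r,2/(1−α),T}(G) + N^{α}_{r,2/(1+α),T}(G) · N^{−α}_{r,2/(1−α),T}(F) ). -/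

import Mathlib

open MeasureTheory ENNReal Real Filter
open scoped RealInnerProductSpace

noncomputable section

/-- Physical/frequency space ℝ³ with the Euclidean norm. -/
abbrev R3 := EuclideanSpace ℝ (Fin 3)

/-- Vector values ℂ⁶ = ℂ³ × ℂ³ (velocity and micro-rotation components). -/
abbrev C6 := (Fin 3 ⊕ Fin 3) → ℂ
/-- ℓ^r norm over ℤ of an ℝ≥0∞-valued sequence, r ∈ [1,∞] (sup when r = ∞). -/
def lnorm (r : ℝ≥0∞) (g : ℤ → ℝ≥0∞) : ℝ≥0∞ :=
  if r = ∞ then ⨆ j, g j else (∑' j, g j ^ r.toReal) ^ (1 / r.toReal)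

/-- The time interval (0,T) ⊆ ℝ, for T ∈ (0,∞]. -/
def timeSet (T : ℝ≥0∞) : Set ℝ := {t : ℝ | 0 < t ∧ ENNReal.ofReal t < T}

/-- L^λ(0,T) norm of an ℝ≥0∞-valued function of time, λ ∈ [1,∞]. -/
def tnorm (lam T : ℝ≥0∞) (h : ℝ → ℝ≥0∞) : ℝ≥0∞ :=
  if lam = ∞ then essSup h (volume.restrict (timeSet T))
  else (∫⁻ t in timeSet T, h t ^ lam.toReal) ^ (1 / lam.toReal)

/-- Littlewood–Paley piece ψ_j(ξ) := ψ(2^{−j}ξ). -/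
def psij (ψ : R3 → ℝ) (j : ℤ) (ξ : R3) : ℝ := ψ ((2 : ℝ) ^ (-j) • ξ)

/-- The standing assumptions on the Littlewood–Paley function ψ: nonnegative, smooth,
supported in the annulus {3/4 ≤ |ξ| ≤ 8/3}, with ∑_{j∈ℤ} ψ(2^{−j}ξ) = 1 for ξ ≠ 0. -/
structure IsLP (ψ : R3 → ℝ) : Prop where
  smooth : ContDiff ℝ (⊤ : ℕ∞) ψ
  nonneg : ∀ ξ, 0 ≤ ψ ξ
  support : ∀ ξ, ψ ξ ≠ 0 → 3 / 4 ≤ ‖ξ‖ ∧ ‖ξ‖ ≤ 8 / 3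
  sum_eq_one : ∀ ξ : R3, ξ ≠ 0 → HasSum (fun j : ℤ => psij ψ j ξ) 1

/-- Fourier-side Besov norm N^s_r(F) = ‖ (2^{js} ‖ψ_j F‖_{L¹})_j ‖_{ℓ^r(ℤ)}. -/
def fbNorm {V : Type*} [NormedAddCommGroup V] [NormedSpace ℝ V]
    (ψ : R3 → ℝ) (s : ℝ) (r : ℝ≥0∞) (F : R3 → V) : ℝ≥0∞ :=
  lnorm r fun j => (2 : ℝ≥0∞) ^ ((j : ℝ) * s) * ∫⁻ ξ, (‖psij ψ j ξ • F ξ‖₊ : ℝ≥0∞)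

/-- Fourier-side Chemin–Lerner norm
N^s_{r,λ,T}(F) = ‖ (2^{js} ‖ t ↦ ‖ψ_j F(t,·)‖_{L¹} ‖_{L^λ(0,T)})_j ‖_{ℓ^r(ℤ)}. -/
def clNorm {V : Type*} [NormedAddCommGroup V] [NormedSpace ℝ V]
    (ψ : R3 → ℝ) (s : ℝ) (r lam T : ℝ≥0∞) (F : ℝ → R3 → V) : ℝ≥0∞ :=
  lnorm r fun j => (2 : ℝ≥0∞) ^ ((j : ℝ) * s) *
    tnorm lam T fun t => ∫⁻ ξ, (‖psij ψ j ξ • F t ξ‖₊ : ℝ≥0∞)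

/-- Convolution on ℝ³ (of Fourier transforms). -/
def conv (f g : R3 → ℂ) (ξ : R3) : ℂ := ∫ η, f (ξ - η) * g η

/-! ### Auxiliary lemmas -/

lemma rpow_split (x : ℝ≥0∞) {a b : ℝ} (ha : 0 ≤ a) (hb : 0 ≤ b) :
    x ^ (a + b) = x ^ a * x ^ b := ENNReal.rpow_add_of_nonneg a b ha hb

lemma rpow_split' (x : ℝ≥0∞) {a b c : ℝ} (h : c = a + b) (ha : 0 ≤ a) (hb : 0 ≤ b) :
    x ^ c = x ^ a * x ^ b := by rw [h]; exact rpow_split x ha hb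

lemma lnorm_le_tsum {r : ℝ≥0∞} (hr1 : 1 ≤ r) (hr2 : r ≠ ∞) (g : ℤ → ℝ≥0∞) :
    lnorm r g ≤ ∑' j, g j := by
  have hρ1 : 1 ≤ r.toReal := by
    rw [← ENNReal.toReal_one]
    exact ENNReal.toReal_mono hr2 hr1
  have hρ0 : 0 < r.toReal := lt_of_lt_of_le one_pos hρ1
  rw [lnorm, if_neg hr2]
  set S := ∑' j, g j with hS
  rcases eq_or_ne S ∞ with h | h
  · simp [h]
  have hsplit : r.toReal = (r.toReal - 1) + 1 := by ring
  have key : ∑' j, g j ^ r.toReal ≤ S ^ r.toReal := by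
    calc ∑' j, g j ^ r.toReal ≤ ∑' j, S ^ (r.toReal - 1) * g j := by
          apply ENNReal.tsum_le_tsum
          intro j
          rw [rpow_split' (g j) hsplit (by linarith) (by norm_num), ENNReal.rpow_one]
          exact mul_le_mul_left (ENNReal.rpow_le_rpow (ENNReal.le_tsum j) (by linarith)) _
      _ = S ^ (r.toReal - 1) * S := by rw [ENNReal.tsum_mul_left]
      _ = S ^ r.toReal := by
          rw [rpow_split' S hsplit (by linarith) (by norm_num), ENNReal.rpow_one]
  calc (∑' j, g j ^ r.toReal) ^ (1 / r.toReal) ≤ (S ^ r.toReal) ^ (1 / r.toReal) :=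
        ENNReal.rpow_le_rpow key (by positivity)
    _ = S := by
        rw [← ENNReal.rpow_mul, mul_one_div_cancel (ne_of_gt hρ0), ENNReal.rpow_one]

lemma lnorm_two_le {r : ℝ≥0∞} (hr1 : 1 ≤ r) (hr2 : r ≤ 2) (g : ℤ → ℝ≥0∞) :
    lnorm 2 g ≤ lnorm r g := by
  have hrne : r ≠ ∞ := ne_top_of_le_ne_top (by norm_num) hr2
  have hρ1 : 1 ≤ r.toReal := by
    rw [← ENNReal.toReal_one]; exact ENNReal.toReal_mono hrne hr1
  have hρ2 : r.toReal ≤ 2 := by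
    have := ENNReal.toReal_mono (by norm_num : (2:ℝ≥0∞) ≠ ∞) hr2
    simpa using this
  have hρ0 : 0 < r.toReal := lt_of_lt_of_le one_pos hρ1
  rw [lnorm, lnorm, if_neg hrne, if_neg (by norm_num : (2:ℝ≥0∞) ≠ ∞)]
  have h2 : (2:ℝ≥0∞).toReal = (2:ℝ) := by norm_num
  rw [h2]
  set ρ := r.toReal
  set S := (∑' j, g j ^ ρ) ^ (1/ρ) with hSdef
  rcases eq_or_ne S ∞ with h | h
  · simp [h]
  have hSρ : S ^ ρ = ∑' j, g j ^ ρ := by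
    rw [hSdef, ← ENNReal.rpow_mul, one_div_mul_cancel (ne_of_gt hρ0), ENNReal.rpow_one]
  have hle : ∀ j, g j ≤ S := by
    intro j
    have h1 : g j ^ ρ ≤ S ^ ρ := hSρ ▸ ENNReal.le_tsum j
    have := ENNReal.rpow_le_rpow h1 (le_of_lt (by positivity : (0:ℝ) < 1/ρ))
    rwa [← ENNReal.rpow_mul, ← ENNReal.rpow_mul, mul_one_div_cancel (ne_of_gt hρ0),
      ENNReal.rpow_one, ENNReal.rpow_one] at this
  have hsplit : (2:ℝ) = (2 - ρ) + ρ := by ring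
  have key : ∑' j, g j ^ (2:ℝ) ≤ S ^ (2:ℝ) := by
    calc ∑' j, g j ^ (2:ℝ) ≤ ∑' j, S ^ (2 - ρ) * g j ^ ρ := by
          apply ENNReal.tsum_le_tsum
          intro j
          rw [rpow_split' (g j) hsplit (by linarith) (by linarith)]
          exact mul_le_mul_left (ENNReal.rpow_le_rpow (hle j) (by linarith)) _
      _ = S ^ (2 - ρ) * S ^ ρ := by rw [ENNReal.tsum_mul_left, hSρ]
      _ = S ^ (2:ℝ) := by rw [rpow_split' S hsplit (by linarith) (by linarith)]
  calc (∑' j, g j ^ (2:ℝ)) ^ (1/(2:ℝ)) ≤ (S ^ (2:ℝ)) ^ (1/(2:ℝ)) :=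
        ENNReal.rpow_le_rpow key (by positivity)
    _ = S := by rw [← ENNReal.rpow_mul]; norm_num

lemma tsum_mul_le_lnorm2 (x y : ℤ → ℝ≥0∞) :
    ∑' k, x k * y k ≤ lnorm 2 x * lnorm 2 y := by
  have h2 : (2:ℝ≥0∞).toReal = (2:ℝ) := by norm_num
  rw [lnorm, lnorm, if_neg (by norm_num : (2:ℝ≥0∞) ≠ ∞),
    if_neg (by norm_num : (2:ℝ≥0∞) ≠ ∞), h2]
  have conj : (2:ℝ).HolderConjugate 2 := Real.holderConjugate_iff.mpr ⟨by norm_num, by norm_num⟩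
  have := ENNReal.lintegral_mul_le_Lp_mul_Lq (Measure.count : Measure ℤ) conj
    (f := x) (g := y) (Measurable.aemeasurable (by measurability))
    (Measurable.aemeasurable (by measurability))
  simpa [MeasureTheory.lintegral_count] using this

lemma cs_shift (x y : ℤ → ℝ≥0∞) (n : ℤ) :
    ∑' k, x k * y (k + n) ≤ lnorm 2 x * lnorm 2 y := by
  have h := tsum_mul_le_lnorm2 x (fun k => y (k + n))
  have : lnorm 2 (fun k => y (k + n)) = lnorm 2 y := by
    rw [lnorm, lnorm, if_neg (by norm_num : (2:ℝ≥0∞) ≠ ∞),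
      if_neg (by norm_num : (2:ℝ≥0∞) ≠ ∞)]
    congr 1
    exact (Equiv.addRight n).tsum_eq (fun k => y k ^ (2:ℝ≥0∞).toReal)
  rwa [this] at h

lemma schur (α : ℝ) (x y : ℤ → ℝ≥0∞) :
    ∑' p : ℤ × ℤ, (if p.1 ≤ p.2 then
        (2:ℝ≥0∞) ^ (((p.1 - p.2 : ℤ) : ℝ) * α) * (x p.1 * y p.2) else 0)
      ≤ (∑' n : ℕ, (2:ℝ≥0∞) ^ (-(n:ℝ) * α)) * (lnorm 2 x * lnorm 2 y) := by
  set f : ℤ × ℤ → ℝ≥0∞ := fun p => if p.1 ≤ p.2 then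
        (2:ℝ≥0∞) ^ (((p.1 - p.2 : ℤ) : ℝ) * α) * (x p.1 * y p.2) else 0 with hf
  set e : ℤ × ℕ → ℤ × ℤ := fun q => (q.1, q.1 + q.2) with he
  have hinj : Function.Injective e := by
    intro a b hab
    simp only [he, Prod.mk.injEq] at hab
    obtain ⟨h1, h2⟩ := hab
    rw [h1] at h2
    exact Prod.ext h1 (by omega)
  have hsupp : Function.support f ⊆ Set.range e := by
    intro p hp
    rw [Function.mem_support, hf] at hp
    by_cases hle : p.1 ≤ p.2
    · refine ⟨(p.1, (p.2 - p.1).toNat), ?_⟩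
      have hn : ((p.2 - p.1).toNat : ℤ) = p.2 - p.1 := Int.toNat_of_nonneg (by omega)
      simp only [he]
      exact Prod.ext rfl (by rw [hn]; ring)
    · simp [hle] at hp
  have h1 : ∑' p, f p = ∑' q, f (e q) := (hinj.tsum_eq hsupp).symm
  rw [h1]
  have h2 : ∀ q : ℤ × ℕ, f (e q) = (2:ℝ≥0∞) ^ (-(q.2:ℝ) * α) * (x q.1 * y (q.1 + q.2)) := by
    rintro ⟨k, n⟩
    simp only [he, hf]
    rw [if_pos (by omega : k ≤ k + (n:ℤ))]
    congr 2
    push_cast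
    ring
  calc ∑' q : ℤ × ℕ, f (e q)
      = ∑' (k : ℤ) (n : ℕ), (2:ℝ≥0∞) ^ (-(n:ℝ) * α) * (x k * y (k + n)) := by
        rw [ENNReal.tsum_prod']
        exact tsum_congr fun k => tsum_congr fun n => h2 (k, n)
    _ = ∑' (n : ℕ) (k : ℤ), (2:ℝ≥0∞) ^ (-(n:ℝ) * α) * (x k * y (k + n)) := ENNReal.tsum_comm
    _ ≤ ∑' (n : ℕ), (2:ℝ≥0∞) ^ (-(n:ℝ) * α) * (lnorm 2 x * lnorm 2 y) := by
        apply ENNReal.tsum_le_tsum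
        intro n
        rw [ENNReal.tsum_mul_left]
        exact mul_le_mul_right (cs_shift x y n) _
    _ = (∑' n : ℕ, (2:ℝ≥0∞) ^ (-(n:ℝ) * α)) * (lnorm 2 x * lnorm 2 y) :=
        ENNReal.tsum_mul_right

lemma nnnorm_psij_smul {ψ : R3 → ℝ} (hψ : IsLP ψ) (j : ℤ) (ξ : R3) (v : ℂ) :
    (‖psij ψ j ξ • v‖₊ : ℝ≥0∞) = ENNReal.ofReal (psij ψ j ξ) * (‖v‖₊ : ℝ≥0∞) := by
  simp only [psij]
  rw [nnnorm_smul, ENNReal.coe_mul, ← enorm_eq_nnnorm (ψ ((2 : ℝ) ^ (-j) • ξ)), Real.enorm_eq_ofReal (hψ.nonneg _)]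

lemma psij_meas {ψ : R3 → ℝ} (hψ : IsLP ψ) (j : ℤ) :
    Measurable fun ξ : R3 => ENNReal.ofReal (psij ψ j ξ) := by
  apply ENNReal.measurable_ofReal.comp
  exact (hψ.smooth.continuous.comp (continuous_const_smul _)).measurable

lemma psij_tsum_one {ψ : R3 → ℝ} (hψ : IsLP ψ) {ξ : R3} (hξ : ξ ≠ 0) :
    ∑' j : ℤ, ENNReal.ofReal (psij ψ j ξ) = 1 := by
  have h := hψ.sum_eq_one ξ hξ
  simp only [psij] at h ⊢
  rw [← ENNReal.ofReal_tsum_of_nonneg (fun j => hψ.nonneg _) h.summable, h.tsum_eq]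
  simp

lemma lp_lintegral_identity {ψ : R3 → ℝ} (hψ : IsLP ψ) {H : R3 → ℝ≥0∞}
    (hH : AEMeasurable H) :
    ∑' j : ℤ, ∫⁻ ξ, ENNReal.ofReal (psij ψ j ξ) * H ξ = ∫⁻ ξ, H ξ := by
  rw [← lintegral_tsum (f := fun j ξ => ENNReal.ofReal (psij ψ j ξ) * H ξ) fun j => ((psij_meas hψ j).aemeasurable.mul hH)]
  apply lintegral_congr_ae
  have h0 : (volume : Measure R3) {0} = 0 := measure_singleton 0
  filter_upwards [measure_eq_zero_iff_ae_notMem.mp h0] with ξ hξ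
  have hξ' : ξ ≠ 0 := hξ
  rw [ENNReal.tsum_mul_right, psij_tsum_one hψ hξ', one_mul]

lemma tnorm_one (T : ℝ≥0∞) (h : ℝ → ℝ≥0∞) :
    tnorm 1 T h = ∫⁻ t in timeSet T, h t := by
  rw [tnorm, if_neg (by norm_num : (1:ℝ≥0∞) ≠ ∞)]
  simp

lemma tnorm_ofReal {p : ℝ} (hp : 0 ≤ p) (T : ℝ≥0∞) (h : ℝ → ℝ≥0∞) :
    tnorm (ENNReal.ofReal p) T h = (∫⁻ t in timeSet T, h t ^ p) ^ (1/p) := by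
  rw [tnorm, if_neg ENNReal.ofReal_ne_top, ENNReal.toReal_ofReal hp]

lemma holder_time {p q : ℝ} (hpq : p.HolderConjugate q) (T : ℝ≥0∞) {u v : ℝ → ℝ≥0∞}
    (hu : AEMeasurable u (volume.restrict (timeSet T)))
    (hv : AEMeasurable v (volume.restrict (timeSet T))) :
    ∫⁻ t in timeSet T, u t * v t ≤
      tnorm (ENNReal.ofReal p) T u * tnorm (ENNReal.ofReal q) T v := by
  rw [tnorm_ofReal hpq.nonneg, tnorm_ofReal hpq.symm.nonneg]
  exact ENNReal.lintegral_mul_le_Lp_mul_Lq _ hpq hu hv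
/-- **Lemma 2.5, product law, Fourier-side form.** Let r ∈ [1,2], T ∈ (0,∞] and
α ∈ (0,1). There is C > 0 such that for all measurable F,G : (0,T) × ℝ³ → ℂ (Fourier transforms
of f, g, so that the Fourier transform of fg at time t is (2π)^{−3}F(t,·)∗G(t,·)), one has
N^{0}_{r,1,T}((2π)^{−3}F∗G) ≤ C(N^{α}_{r,2/(1+α),T}(F)·N^{−α}_{r,2/(1−α),T}(G)
+ N^{α}_{r,2/(1+α),T}(G)·N^{−α}_{r,2/(1−α),T}(F)). -/
theorem product_law_fourier_besov (ψ : R3 → ℝ) (hψ : IsLP ψ) (r : ℝ≥0∞) (hr1 : 1 ≤ r)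
    (hr2 : r ≤ 2) (T : ℝ≥0∞) (hT : 0 < T) (α : ℝ) (hα0 : 0 < α) (hα1 : α < 1) :
    ∃ C : ℝ, 0 < C ∧ ∀ F G : ℝ → R3 → ℂ,
      Measurable (Function.uncurry F) → Measurable (Function.uncurry G) →
      clNorm ψ 0 r 1 T (fun t ξ => (((2 * Real.pi) ^ 3)⁻¹ : ℝ) • conv (F t) (G t) ξ) ≤
        ENNReal.ofReal C *
          (clNorm ψ α r (ENNReal.ofReal (2 / (1 + α))) T F *
              clNorm ψ (-α) r (ENNReal.ofReal (2 / (1 - α))) T G +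
            clNorm ψ α r (ENNReal.ofReal (2 / (1 + α))) T G *
              clNorm ψ (-α) r (ENNReal.ofReal (2 / (1 - α))) T F) := by
  have hπ : (0:ℝ) < (2 * Real.pi) ^ 3 := by positivity
  set c : ℝ := (((2 * Real.pi) ^ 3)⁻¹ : ℝ) with hcdef
  have hc : 0 ≤ c := by positivity
  have hrne : r ≠ ∞ := ne_top_of_le_ne_top (by norm_num) hr2
  set p : ℝ := 2 / (1 + α) with hpdef
  set q : ℝ := 2 / (1 - α) with hqdef
  have hconj : p.HolderConjugate q := by
    rw [Real.holderConjugate_iff]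
    constructor
    · rw [hpdef, lt_div_iff₀ (by linarith)]; linarith
    · rw [hpdef, hqdef]
      rw [show (2 / (1 + α))⁻¹ = (1 + α) / 2 by rw [inv_div],
          show (2 / (1 - α))⁻¹ = (1 - α) / 2 by rw [inv_div]]
      ring
  set Cg : ℝ≥0∞ := ∑' n : ℕ, (2:ℝ≥0∞) ^ (-(n:ℝ) * α) with hCgdef
  have hCg : Cg ≠ ∞ := by
    have hlt : (2:ℝ≥0∞) ^ (-α) < 1 :=
      ENNReal.rpow_lt_one_of_one_lt_of_neg (by norm_num) (by linarith)
    have hCge : Cg = ∑' n : ℕ, ((2:ℝ≥0∞) ^ (-α)) ^ n := by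
      rw [hCgdef]
      refine tsum_congr fun n => ?_
      rw [← ENNReal.rpow_natCast ((2:ℝ≥0∞) ^ (-α)) n, ← ENNReal.rpow_mul]
      congr 1
      ring
    rw [hCge, ENNReal.tsum_geometric, ENNReal.inv_ne_top]
    exact (tsub_pos_of_lt hlt).ne'
  set K : ℝ≥0∞ := ENNReal.ofReal c * Cg with hKdef
  have hK : K ≠ ∞ := ENNReal.mul_ne_top ENNReal.ofReal_ne_top hCg
  refine ⟨K.toReal + 1, by positivity, ?_⟩
  intro F G hF hG
  have hKle : K ≤ ENNReal.ofReal (K.toReal + 1) := by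
    rw [ENNReal.ofReal_add ENNReal.toReal_nonneg (by norm_num),
      ENNReal.ofReal_toReal hK]
    exact le_self_add
  -- basic measurability
  have hFt : ∀ t, Measurable (F t) := fun t => hF.comp measurable_prodMk_left
  have hGt : ∀ t, Measurable (G t) := fun t => hG.comp measurable_prodMk_left
  have hconvm : Measurable (fun z : ℝ × R3 => conv (F z.1) (G z.1) z.2) := by
    have h1 : Measurable (fun z : (ℝ × R3) × R3 => F z.1.1 (z.1.2 - z.2) * G z.1.1 z.2) :=
      (hF.comp ((measurable_fst.comp measurable_fst).prodMk
        ((measurable_snd.comp measurable_fst).sub measurable_snd))).mul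
        (hG.comp ((measurable_fst.comp measurable_fst).prodMk measurable_snd))
    have h2 := MeasureTheory.StronglyMeasurable.integral_prod_right'
      (ν := (volume : Measure R3)) h1.stronglyMeasurable
    simpa [conv] using h2.measurable
  -- the dyadic pieces of F and G
  set a : ℤ → ℝ → ℝ≥0∞ := fun k t => ∫⁻ ξ, (‖psij ψ k ξ • F t ξ‖₊ : ℝ≥0∞) with hadef
  set b : ℤ → ℝ → ℝ≥0∞ := fun k t => ∫⁻ ξ, (‖psij ψ k ξ • G t ξ‖₊ : ℝ≥0∞) with hbdef
  have hpsijm : ∀ k : ℤ, Measurable fun z : ℝ × R3 => psij ψ k z.2 := fun k =>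
    ((hψ.smooth.continuous.comp (continuous_const_smul _)).measurable).comp measurable_snd
  have ham : ∀ k, Measurable (a k) := by
    intro k
    exact Measurable.lintegral_prod_right
      (f := fun t ξ => (‖psij ψ k ξ • F t ξ‖₊ : ℝ≥0∞))
      (Measurable.enorm ((hpsijm k).smul hF))
  have hbm : ∀ k, Measurable (b k) := by
    intro k
    exact Measurable.lintegral_prod_right
      (f := fun t ξ => (‖psij ψ k ξ • G t ξ‖₊ : ℝ≥0∞))
      (Measurable.enorm ((hpsijm k).smul hG))
  -- LP identity for F and G
  have haid : ∀ t, ∑' k : ℤ, a k t = ∫⁻ ξ, (‖F t ξ‖₊ : ℝ≥0∞) := by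
    intro t
    have h1 : ∀ k : ℤ, a k t = ∫⁻ ξ, ENNReal.ofReal (psij ψ k ξ) * (‖F t ξ‖₊ : ℝ≥0∞) :=
      fun k => lintegral_congr fun ξ => nnnorm_psij_smul hψ k ξ _
    rw [tsum_congr h1]
    exact lp_lintegral_identity hψ ((hFt t).enorm.aemeasurable)
  have hbid : ∀ t, ∑' l : ℤ, b l t = ∫⁻ ξ, (‖G t ξ‖₊ : ℝ≥0∞) := by
    intro t
    have h1 : ∀ l : ℤ, b l t = ∫⁻ ξ, ENNReal.ofReal (psij ψ l ξ) * (‖G t ξ‖₊ : ℝ≥0∞) :=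
      fun l => lintegral_congr fun ξ => nnnorm_psij_smul hψ l ξ _
    rw [tsum_congr h1]
    exact lp_lintegral_identity hψ ((hGt t).enorm.aemeasurable)
  -- Young-type bound for the convolution
  have hconv_bound : ∀ t, (∫⁻ ξ, (‖(c : ℝ) • conv (F t) (G t) ξ‖₊ : ℝ≥0∞))
      ≤ ENNReal.ofReal c *
        ((∫⁻ ξ, (‖F t ξ‖₊ : ℝ≥0∞)) * (∫⁻ ξ, (‖G t ξ‖₊ : ℝ≥0∞))) := by
    intro t
    have step1 : ∀ ξ, (‖(c:ℝ) • conv (F t) (G t) ξ‖₊ : ℝ≥0∞)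
        ≤ ENNReal.ofReal c * ∫⁻ η, (‖F t (ξ - η)‖₊ : ℝ≥0∞) * (‖G t η‖₊ : ℝ≥0∞) := by
      intro ξ
      rw [nnnorm_smul, ENNReal.coe_mul, ← enorm_eq_nnnorm c, Real.enorm_eq_ofReal hc]
      apply mul_le_mul_right
      calc (‖conv (F t) (G t) ξ‖₊ : ℝ≥0∞)
          ≤ ∫⁻ η, (‖F t (ξ - η) * G t η‖₊ : ℝ≥0∞) :=
            enorm_integral_le_lintegral_enorm _
        _ = ∫⁻ η, (‖F t (ξ - η)‖₊ : ℝ≥0∞) * (‖G t η‖₊ : ℝ≥0∞) := by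
            apply lintegral_congr
            intro η
            simp [nnnorm_mul]
    calc (∫⁻ ξ, (‖(c:ℝ) • conv (F t) (G t) ξ‖₊ : ℝ≥0∞))
        ≤ ∫⁻ ξ, ENNReal.ofReal c *
            ∫⁻ η, (‖F t (ξ - η)‖₊ : ℝ≥0∞) * (‖G t η‖₊ : ℝ≥0∞) :=
          lintegral_mono step1
      _ = ENNReal.ofReal c *
            ∫⁻ ξ, ∫⁻ η, (‖F t (ξ - η)‖₊ : ℝ≥0∞) * (‖G t η‖₊ : ℝ≥0∞) :=
          lintegral_const_mul' _ _ ENNReal.ofReal_ne_top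
      _ = ENNReal.ofReal c *
            ∫⁻ η, ∫⁻ ξ, (‖F t (ξ - η)‖₊ : ℝ≥0∞) * (‖G t η‖₊ : ℝ≥0∞) := by
          congr 1
          apply lintegral_lintegral_swap
          exact ((((hFt t).comp (measurable_fst.sub measurable_snd)).enorm).mul
            (((hGt t).comp measurable_snd).enorm)).aemeasurable
      _ = ENNReal.ofReal c *
            ∫⁻ η, (∫⁻ ξ, (‖F t (ξ - η)‖₊ : ℝ≥0∞)) * (‖G t η‖₊ : ℝ≥0∞) := by
          congr 1
          apply lintegral_congr
          intro η
          exact lintegral_mul_const'' _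
            (((hFt t).comp (measurable_id.sub measurable_const)).enorm.aemeasurable)
      _ = ENNReal.ofReal c *
            ∫⁻ η, (∫⁻ ξ, (‖F t ξ‖₊ : ℝ≥0∞)) * (‖G t η‖₊ : ℝ≥0∞) := by
          congr 1
          apply lintegral_congr
          intro η
          congr 1
          exact (measurePreserving_sub_right volume η).lintegral_comp (hFt t).enorm
      _ = ENNReal.ofReal c *
            ((∫⁻ ξ, (‖F t ξ‖₊ : ℝ≥0∞)) * (∫⁻ η, (‖G t η‖₊ : ℝ≥0∞))) := by
          congr 1
          exact lintegral_const_mul'' _ ((hGt t).enorm.aemeasurable)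
  -- Reduction of the left-hand side to the double sum
  have hLHSle : clNorm ψ 0 r 1 T (fun t ξ => (c:ℝ) • conv (F t) (G t) ξ)
      ≤ ENNReal.ofReal c * ∑' pp : ℤ × ℤ, ∫⁻ t in timeSet T, a pp.1 t * b pp.2 t := by
    have hcjm : ∀ j : ℤ, Measurable fun t =>
        ∫⁻ ξ, (‖psij ψ j ξ • ((c:ℝ) • conv (F t) (G t) ξ)‖₊ : ℝ≥0∞) := by
      intro j
      exact Measurable.lintegral_prod_right
        (f := fun t ξ => (‖psij ψ j ξ • ((c:ℝ) • conv (F t) (G t) ξ)‖₊ : ℝ≥0∞))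
        (Measurable.enorm ((hpsijm j).smul (hconvm.const_smul (c:ℝ))))
    have hpoint : ∀ t, (∑' j : ℤ, ∫⁻ ξ, (‖psij ψ j ξ • ((c:ℝ) • conv (F t) (G t) ξ)‖₊ : ℝ≥0∞))
        ≤ ENNReal.ofReal c * ((∫⁻ ξ, (‖F t ξ‖₊ : ℝ≥0∞)) * (∫⁻ ξ, (‖G t ξ‖₊ : ℝ≥0∞))) := by
      intro t
      have h1 : ∀ j : ℤ, (∫⁻ ξ, (‖psij ψ j ξ • ((c:ℝ) • conv (F t) (G t) ξ)‖₊ : ℝ≥0∞))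
          = ∫⁻ ξ, ENNReal.ofReal (psij ψ j ξ) * (‖(c:ℝ) • conv (F t) (G t) ξ‖₊ : ℝ≥0∞) :=
        fun j => lintegral_congr fun ξ => nnnorm_psij_smul hψ j ξ _
      rw [tsum_congr h1, lp_lintegral_identity hψ]
      · exact hconv_bound t
      · exact ((hconvm.comp measurable_prodMk_left).const_smul (c:ℝ)).enorm.aemeasurable
    calc clNorm ψ 0 r 1 T (fun t ξ => (c:ℝ) • conv (F t) (G t) ξ)
        = lnorm r fun j => ∫⁻ t in timeSet T,
            ∫⁻ ξ, (‖psij ψ j ξ • ((c:ℝ) • conv (F t) (G t) ξ)‖₊ : ℝ≥0∞) := by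
          simp only [clNorm, mul_zero, ENNReal.rpow_zero, one_mul, tnorm_one]
      _ ≤ ∑' j : ℤ, ∫⁻ t in timeSet T,
            ∫⁻ ξ, (‖psij ψ j ξ • ((c:ℝ) • conv (F t) (G t) ξ)‖₊ : ℝ≥0∞) :=
          lnorm_le_tsum hr1 hrne _
      _ = ∫⁻ t in timeSet T, ∑' j : ℤ,
            ∫⁻ ξ, (‖psij ψ j ξ • ((c:ℝ) • conv (F t) (G t) ξ)‖₊ : ℝ≥0∞) :=
          (lintegral_tsum fun j => (hcjm j).aemeasurable.restrict).symm
      _ ≤ ∫⁻ t in timeSet T, ENNReal.ofReal c *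
            ((∫⁻ ξ, (‖F t ξ‖₊ : ℝ≥0∞)) * (∫⁻ ξ, (‖G t ξ‖₊ : ℝ≥0∞))) :=
          lintegral_mono hpoint
      _ = ∫⁻ t in timeSet T, ENNReal.ofReal c *
            ∑' pp : ℤ × ℤ, a pp.1 t * b pp.2 t := by
          apply lintegral_congr
          intro t
          congr 1
          calc (∫⁻ ξ, (‖F t ξ‖₊ : ℝ≥0∞)) * (∫⁻ ξ, (‖G t ξ‖₊ : ℝ≥0∞))
              = (∑' k : ℤ, a k t) * (∑' l : ℤ, b l t) := by rw [haid t, hbid t]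
            _ = ∑' k : ℤ, (a k t * ∑' l : ℤ, b l t) := ENNReal.tsum_mul_right.symm
            _ = ∑' (k : ℤ) (l : ℤ), a k t * b l t :=
                tsum_congr fun k => ENNReal.tsum_mul_left.symm
            _ = ∑' pp : ℤ × ℤ, a pp.1 t * b pp.2 t :=
                (ENNReal.tsum_prod' (f := fun pp : ℤ × ℤ => a pp.1 t * b pp.2 t)).symm
      _ = ENNReal.ofReal c * ∫⁻ t in timeSet T,
            ∑' pp : ℤ × ℤ, a pp.1 t * b pp.2 t :=
          lintegral_const_mul' _ _ ENNReal.ofReal_ne_top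
      _ = ENNReal.ofReal c * ∑' pp : ℤ × ℤ, ∫⁻ t in timeSet T, a pp.1 t * b pp.2 t := by
          congr 1
          exact lintegral_tsum fun pp => ((ham pp.1).mul (hbm pp.2)).aemeasurable.restrict
  -- the weighted sequences
  set A : ℤ → ℝ≥0∞ := fun k => (2:ℝ≥0∞) ^ ((k:ℝ) * α) * tnorm (ENNReal.ofReal p) T (a k)
    with hAdef
  set A' : ℤ → ℝ≥0∞ := fun k => (2:ℝ≥0∞) ^ ((k:ℝ) * (-α)) * tnorm (ENNReal.ofReal q) T (a k)
    with hA'def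
  set B : ℤ → ℝ≥0∞ := fun l => (2:ℝ≥0∞) ^ ((l:ℝ) * α) * tnorm (ENNReal.ofReal p) T (b l)
    with hBdef
  set B' : ℤ → ℝ≥0∞ := fun l => (2:ℝ≥0∞) ^ ((l:ℝ) * (-α)) * tnorm (ENNReal.ofReal q) T (b l)
    with hB'def
  -- identification with the Chemin-Lerner norms
  have hNA : clNorm ψ α r (ENNReal.ofReal p) T F = lnorm r A := rfl
  have hNA' : clNorm ψ (-α) r (ENNReal.ofReal q) T F = lnorm r A' := rfl
  have hNB : clNorm ψ α r (ENNReal.ofReal p) T G = lnorm r B := rfl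
  have hNB' : clNorm ψ (-α) r (ENNReal.ofReal q) T G = lnorm r B' := rfl
  -- Hoelder bound per pair
  have hpair : ∀ pp : ℤ × ℤ, (∫⁻ t in timeSet T, a pp.1 t * b pp.2 t) ≤
      (if pp.1 ≤ pp.2 then
        (2:ℝ≥0∞) ^ (((pp.1 - pp.2 : ℤ):ℝ) * α) * (A' pp.1 * B pp.2) else 0)
      + (if pp.2 ≤ pp.1 then
        (2:ℝ≥0∞) ^ (((pp.2 - pp.1 : ℤ):ℝ) * α) * (B' pp.2 * A pp.1) else 0) := by
    rintro ⟨k, l⟩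
    rcases le_total k l with hkl | hkl
    · have h1 : (∫⁻ t in timeSet T, a k t * b l t)
          ≤ tnorm (ENNReal.ofReal q) T (a k) * tnorm (ENNReal.ofReal p) T (b l) := by
        calc ∫⁻ t in timeSet T, a k t * b l t
            = ∫⁻ t in timeSet T, b l t * a k t := by
              apply lintegral_congr; intro t; ring
          _ ≤ tnorm (ENNReal.ofReal p) T (b l) * tnorm (ENNReal.ofReal q) T (a k) :=
              holder_time hconj T ((hbm l).aemeasurable.restrict)
                ((ham k).aemeasurable.restrict)
          _ = tnorm (ENNReal.ofReal q) T (a k) * tnorm (ENNReal.ofReal p) T (b l) :=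
              mul_comm _ _
      have heq : (2:ℝ≥0∞) ^ (((k - l : ℤ):ℝ) * α) * (A' k * B l)
          = tnorm (ENNReal.ofReal q) T (a k) * tnorm (ENNReal.ofReal p) T (b l) := by
        have hw : (2:ℝ≥0∞) ^ (((k - l : ℤ):ℝ) * α) *
            ((2:ℝ≥0∞) ^ ((k:ℝ) * (-α)) * (2:ℝ≥0∞) ^ ((l:ℝ) * α)) = 1 := by
          rw [← ENNReal.rpow_add _ _ (two_ne_zero) (ENNReal.ofNat_ne_top),
              ← ENNReal.rpow_add _ _ (two_ne_zero) (ENNReal.ofNat_ne_top),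
              show ((k - l : ℤ):ℝ) * α + ((k:ℝ) * (-α) + (l:ℝ) * α) = 0 by push_cast; ring,
              ENNReal.rpow_zero]
        calc (2:ℝ≥0∞) ^ (((k - l : ℤ):ℝ) * α) * (A' k * B l)
            = ((2:ℝ≥0∞) ^ (((k - l : ℤ):ℝ) * α) *
                ((2:ℝ≥0∞) ^ ((k:ℝ) * (-α)) * (2:ℝ≥0∞) ^ ((l:ℝ) * α))) *
                (tnorm (ENNReal.ofReal q) T (a k) * tnorm (ENNReal.ofReal p) T (b l)) := by
              simp only [hA'def, hBdef]
              ring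
          _ = tnorm (ENNReal.ofReal q) T (a k) * tnorm (ENNReal.ofReal p) T (b l) := by
              rw [hw, one_mul]
      rw [if_pos hkl]
      exact le_add_right (h1.trans (le_of_eq heq.symm))
    · have h1 : (∫⁻ t in timeSet T, a k t * b l t)
          ≤ tnorm (ENNReal.ofReal p) T (a k) * tnorm (ENNReal.ofReal q) T (b l) :=
        holder_time hconj T ((ham k).aemeasurable.restrict) ((hbm l).aemeasurable.restrict)
      have heq : (2:ℝ≥0∞) ^ (((l - k : ℤ):ℝ) * α) * (B' l * A k)
          = tnorm (ENNReal.ofReal p) T (a k) * tnorm (ENNReal.ofReal q) T (b l) := by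
        have hw : (2:ℝ≥0∞) ^ (((l - k : ℤ):ℝ) * α) *
            ((2:ℝ≥0∞) ^ ((l:ℝ) * (-α)) * (2:ℝ≥0∞) ^ ((k:ℝ) * α)) = 1 := by
          rw [← ENNReal.rpow_add _ _ (two_ne_zero) (ENNReal.ofNat_ne_top),
              ← ENNReal.rpow_add _ _ (two_ne_zero) (ENNReal.ofNat_ne_top),
              show ((l - k : ℤ):ℝ) * α + ((l:ℝ) * (-α) + (k:ℝ) * α) = 0 by push_cast; ring,
              ENNReal.rpow_zero]
        calc (2:ℝ≥0∞) ^ (((l - k : ℤ):ℝ) * α) * (B' l * A k)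
            = ((2:ℝ≥0∞) ^ (((l - k : ℤ):ℝ) * α) *
                ((2:ℝ≥0∞) ^ ((l:ℝ) * (-α)) * (2:ℝ≥0∞) ^ ((k:ℝ) * α))) *
                (tnorm (ENNReal.ofReal p) T (a k) * tnorm (ENNReal.ofReal q) T (b l)) := by
              simp only [hB'def, hAdef]
              ring
          _ = tnorm (ENNReal.ofReal p) T (a k) * tnorm (ENNReal.ofReal q) T (b l) := by
              rw [hw, one_mul]
      rw [if_pos hkl]
      exact le_add_left (h1.trans (le_of_eq heq.symm))
  -- summing up
  have hS1 : (∑' pp : ℤ × ℤ, if pp.1 ≤ pp.2 then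
        (2:ℝ≥0∞) ^ (((pp.1 - pp.2 : ℤ):ℝ) * α) * (A' pp.1 * B pp.2) else 0)
      ≤ Cg * (lnorm 2 A' * lnorm 2 B) := schur α A' B
  have hS2 : (∑' pp : ℤ × ℤ, if pp.2 ≤ pp.1 then
        (2:ℝ≥0∞) ^ (((pp.2 - pp.1 : ℤ):ℝ) * α) * (B' pp.2 * A pp.1) else 0)
      ≤ Cg * (lnorm 2 B' * lnorm 2 A) := by
    have hswap : (∑' pp : ℤ × ℤ, if pp.2 ≤ pp.1 then
          (2:ℝ≥0∞) ^ (((pp.2 - pp.1 : ℤ):ℝ) * α) * (B' pp.2 * A pp.1) else 0)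
        = ∑' qq : ℤ × ℤ, (if qq.1 ≤ qq.2 then
          (2:ℝ≥0∞) ^ (((qq.1 - qq.2 : ℤ):ℝ) * α) * (B' qq.1 * A qq.2) else 0) := by
      rw [← (Equiv.prodComm ℤ ℤ).tsum_eq (fun pp : ℤ × ℤ => if pp.2 ≤ pp.1 then
          (2:ℝ≥0∞) ^ (((pp.2 - pp.1 : ℤ):ℝ) * α) * (B' pp.2 * A pp.1) else 0)]
      rfl
    rw [hswap]
    exact schur α B' A
  have htwoA : lnorm 2 A ≤ lnorm r A := lnorm_two_le hr1 hr2 A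
  have htwoA' : lnorm 2 A' ≤ lnorm r A' := lnorm_two_le hr1 hr2 A'
  have htwoB : lnorm 2 B ≤ lnorm r B := lnorm_two_le hr1 hr2 B
  have htwoB' : lnorm 2 B' ≤ lnorm r B' := lnorm_two_le hr1 hr2 B'
  rw [hNA, hNA', hNB, hNB']
  calc clNorm ψ 0 r 1 T (fun t ξ => (c:ℝ) • conv (F t) (G t) ξ)
      ≤ ENNReal.ofReal c * ∑' pp : ℤ × ℤ, ∫⁻ t in timeSet T, a pp.1 t * b pp.2 t := hLHSle
    _ ≤ ENNReal.ofReal c *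
        ((∑' pp : ℤ × ℤ, if pp.1 ≤ pp.2 then
          (2:ℝ≥0∞) ^ (((pp.1 - pp.2 : ℤ):ℝ) * α) * (A' pp.1 * B pp.2) else 0)
        + (∑' pp : ℤ × ℤ, if pp.2 ≤ pp.1 then
          (2:ℝ≥0∞) ^ (((pp.2 - pp.1 : ℤ):ℝ) * α) * (B' pp.2 * A pp.1) else 0)) := by
        apply mul_le_mul_right
        exact (ENNReal.tsum_le_tsum hpair).trans (le_of_eq ENNReal.tsum_add)
    _ ≤ ENNReal.ofReal c *
        (Cg * (lnorm 2 A' * lnorm 2 B) + Cg * (lnorm 2 B' * lnorm 2 A)) :=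
        mul_le_mul_right (add_le_add hS1 hS2) _
    _ ≤ ENNReal.ofReal c *
        (Cg * (lnorm r A' * lnorm r B) + Cg * (lnorm r B' * lnorm r A)) := by
        apply mul_le_mul_right
        exact add_le_add (mul_le_mul_right (mul_le_mul' htwoA' htwoB) _)
          (mul_le_mul_right (mul_le_mul' htwoB' htwoA) _)
    _ = K * (lnorm r A * lnorm r B' + lnorm r B * lnorm r A') := by
        rw [hKdef]
        ring
    _ ≤ ENNReal.ofReal (K.toReal + 1) *
        (lnorm r A * lnorm r B' + lnorm r B * lnorm r A') :=
        mul_le_mul_left hKle _
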